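/- For two agents in the general externalities model, the cut-and-choose procedure yields a 1-EMMS allocation: if O is a partition of M into 2 bundles attaining EMMS_1 (i.e., U_1(worst_1(O)) = EMMS_1) and A is the allocation of the bundles of O that maximizes agent 2's utility (A = best_2(O)), then U_1(A) ≥ EMMS_1 and U_2(A) ≥ EMMS_2. -/

import Mathlib

/-!
General externalities model.  Items form a finite type `Item`; a partition of the
items into `n` bundles is a function `Item → Fin n`; an allocation of a partition
is a bijection `A : Fin n ≃ Fin n` assigning bundle `j` to agent `A j`.  We fix
one agent `i`; `V j b` denotes `V_{j,i}({b})`, the (additive) utility that agent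
`i` receives when item `b` is allocated to agent `j`.
-/

/-- Utility of the fixed agent under the allocation `A` of the partition `P`:
`U_i(A) = ∑ j V_{A(j),i}(P_j)`. -/
noncomputable def gUtility {Item : Type*} [Fintype Item] {n : ℕ}
    (V : Fin n → Item → ℝ) (P : Item → Fin n) (A : Equiv.Perm (Fin n)) : ℝ :=
  ∑ j, ∑ b, if P b = j then V (A j) b else 0

/-- Utility of the worst allocation of the partition `P` for the fixed agent. -/
noncomputable def gWorst {Item : Type*} [Fintype Item] {n : ℕ}
    (V : Fin n → Item → ℝ) (P : Item → Fin n) : ℝ :=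
  ⨅ A : Equiv.Perm (Fin n), gUtility V P A

/-- Utility of the best allocation of the partition `P` for the fixed agent. -/
noncomputable def gBest {Item : Type*} [Fintype Item] {n : ℕ}
    (V : Fin n → Item → ℝ) (P : Item → Fin n) : ℝ :=
  ⨆ A : Equiv.Perm (Fin n), gUtility V P A

/-- Extended-maximin-share of the fixed agent. -/
noncomputable def gEMMS {Item : Type*} [Fintype Item] {n : ℕ}
    (V : Fin n → Item → ℝ) : ℝ :=
  ⨆ P : Item → Fin n, gWorst V P

/-!
Cut-and-choose. The cutter receives one of the two allocations of her own EMMS-attaining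
partition `O`, hence at least its worst one, which is `EMMS_1`. For the chooser, averaging
over all allocations shows that `worst(P) ≤ best(O)` for any two partitions `P` and `O`:
the average utility of the allocations of a partition does not depend on the partition,
since relabelling the bundles permutes the allocations. So `EMMS_2 ≤ best_2(O)`, which the
chooser gets.
-/

section

variable {Item : Type*} [Fintype Item] {n : ℕ} (V : Fin n → Item → ℝ)

theorem gUtility_eq_sum (P : Item → Fin n) (A : Equiv.Perm (Fin n)) :
    gUtility V P A = ∑ b, V (A (P b)) b := by
  unfold gUtility
  rw [Finset.sum_comm]
  simp

theorem gWorst_le_gUtility (P : Item → Fin n) (A : Equiv.Perm (Fin n)) :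
    gWorst V P ≤ gUtility V P A :=
  ciInf_le (Set.finite_range _).bddBelow A

theorem gUtility_le_gBest (P : Item → Fin n) (A : Equiv.Perm (Fin n)) :
    gUtility V P A ≤ gBest V P :=
  le_ciSup (Set.finite_range _).bddAbove A

theorem sum_gUtility_eq_sum_gUtility (P Q : Item → Fin n) :
    ∑ A, gUtility V P A = ∑ A, gUtility V Q A := by
  simp only [gUtility_eq_sum]
  calc ∑ A : Equiv.Perm (Fin n), ∑ b, V (A (P b)) b
        = ∑ b, ∑ A : Equiv.Perm (Fin n), V (A (P b)) b := Finset.sum_comm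
    _ = ∑ b, ∑ A : Equiv.Perm (Fin n), V (A (Q b)) b := Finset.sum_congr rfl fun b _ => by
        rw [← Equiv.sum_comp (Equiv.mulRight (Equiv.swap (P b) (Q b)))]
        simp [Equiv.Perm.mul_apply]
    _ = ∑ A : Equiv.Perm (Fin n), ∑ b, V (A (Q b)) b := Finset.sum_comm

theorem gWorst_le_gBest (P O : Item → Fin n) : gWorst V P ≤ gBest V O := by
  have hcard : (0 : ℝ) < Fintype.card (Equiv.Perm (Fin n)) := by positivity
  refine le_of_mul_le_mul_left ?_ hcard
  calc (Fintype.card (Equiv.Perm (Fin n)) : ℝ) * gWorst V P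
      ≤ ∑ A, gUtility V P A := by
        simpa using Finset.card_nsmul_le_sum Finset.univ _ _
          fun A _ => gWorst_le_gUtility V P A
    _ = ∑ A, gUtility V O A := sum_gUtility_eq_sum_gUtility V P O
    _ ≤ Fintype.card (Equiv.Perm (Fin n)) * gBest V O := by
        simpa using Finset.sum_le_card_nsmul Finset.univ _ _
          fun A _ => gUtility_le_gBest V O A

theorem gEMMS_le_gBest (O : Item → Fin n) : gEMMS V ≤ gBest V O :=
  haveI : Nonempty (Item → Fin n) := ⟨O⟩
  ciSup_le fun P => gWorst_le_gBest V P O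

end

-- `V j i b = V_{j,i}({b})`
theorem cut_and_choose_two_agents_general {Item : Type*} [Fintype Item]
    (V : Fin 2 → Fin 2 → Item → ℝ)
    (O : Item → Fin 2)
    (hO : gWorst (fun j => V j 0) O = gEMMS (fun j => V j 0))
    (A : Equiv.Perm (Fin 2))
    (hA : gUtility (fun j => V j 1) O A = gBest (fun j => V j 1) O) :
    gEMMS (fun j => V j 0) ≤ gUtility (fun j => V j 0) O A ∧
      gEMMS (fun j => V j 1) ≤ gUtility (fun j => V j 1) O A :=
  ⟨hO ▸ gWorst_le_gUtility _ O A, hA ▸ gEMMS_le_gBest _ O⟩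

/-- Cut-and-choose for two agents in the general externalities
model.  Here `V j i b = V_{j,i}({b})`.  If `O` is a partition of the items into
two bundles attaining `EMMS_1` (its worst allocation for agent `0` has utility
`EMMS_1`), and `A` is an allocation of the bundles of `O` maximizing agent `1`'s
utility, then under `A` agent `0` gets at least `EMMS_1` and agent `1` gets at
least `EMMS_2`. -/
theorem cut_and_choose_two_agents {Item : Type*} [Fintype Item]
    (V : Fin 2 → Fin 2 → Item → ℝ) (hV : ∀ j i b, 0 ≤ V j i b)
    (O : Item → Fin 2)
    (hO : gWorst (fun j => V j 0) O = gEMMS (fun j => V j 0))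
    (A : Equiv.Perm (Fin 2))
    (hA : gUtility (fun j => V j 1) O A = gBest (fun j => V j 1) O) :
    gEMMS (fun j => V j 0) ≤ gUtility (fun j => V j 0) O A ∧
      gEMMS (fun j => V j 1) ≤ gUtility (fun j => V j 1) O A :=
  cut_and_choose_two_agents_general V O hO A hA
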